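/- arXiv:1208.0235 — 5 statements merged into one kernel-verified Lean document; each statement's English description precedes it below -/
import Mathlib

section
/- Let A be a nontrivial unital C*-algebra and let θ be an irrational real number. Suppose u and v are unitary elements of A satisfying the θ-commutation relation u·v = exp(2πiθ)·(v·u). Then the spectrum of u (as an element of A, over ℂ) is the full unit circle {z ∈ ℂ : ‖z‖ = 1}, and likewise the spectrum of v is the full unit circle. -/
/-!
Conjugating `u` by the unitary `v` multiplies it by `exp (2πiθ)`, so the spectrum of `u` is a
nonempty closed subset of the unit circle invariant under rotation by `2πθ`. For irrational `θ`
the powers of this rotation are dense in the circle, so the spectrum contains a dense orbit and,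
being closed, is the whole circle. Conjugating `v` by `u` gives the same for `v`.
-/

open scoped Real Pointwise
open Set

theorem Circle.dense_zpowers_exp_of_irrational {θ : ℝ} (hθ : Irrational θ) :
    Dense (Subgroup.zpowers (Circle.exp (2 * π * θ)) : Set Circle) := by
  have h := AddCircle.denseRange_zsmul_coe_iff (a := θ) (p := 1) |>.mpr (by rwa [div_one])
  have := (AddCircle.homeomorphCircle one_ne_zero).surjective.denseRange.comp h
    (AddCircle.homeomorphCircle one_ne_zero).continuous
  rw [Subgroup.coe_zpowers, ← DenseRange]
  convert this using 1
  funext n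
  simp [AddCircle.homeomorphCircle_apply, AddCircle.toCircle_zsmul, AddCircle.toCircle_apply_mk]

theorem MulAction.orbit_subset_of_le_stabilizer {G X : Type*} [Group G] [TopologicalSpace G]
    [TopologicalSpace X] [MulAction G X] [ContinuousSMul G X] {H : Subgroup G}
    (hH : Dense (H : Set G)) {S : Set X} (hS : IsClosed S) (hHS : H ≤ stabilizer G S)
    {x : X} (hx : x ∈ S) : orbit G x ⊆ S := by
  rintro _ ⟨g, rfl⟩
  have hmaps : MapsTo (· • x) (H : Set G) S := fun h hh ↦
    (mem_stabilizer_iff.mp (hHS hh)) ▸ smul_mem_smul_set hx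
  exact hS.closure_subset
    (map_mem_closure (f := (· • x)) (continuous_id.smul continuous_const) (hH g) hmaps)

theorem Circle.sphere_subset_orbit {z : ℂ} (hz : z ∈ Metric.sphere (0 : ℂ) 1) :
    Metric.sphere (0 : ℂ) 1 ⊆ MulAction.orbit Circle z := by
  intro w hw
  let W : Circle := ⟨w, hw⟩
  let Z : Circle := ⟨z, hz⟩
  refine ⟨W * Z⁻¹, ?_⟩
  show (W * Z⁻¹) • z = w
  rw [Circle.smul_def, Circle.coe_mul, Circle.coe_inv, smul_eq_mul]
  exact inv_mul_cancel_right₀ Z.coe_ne_zero w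

theorem Circle.eq_sphere_of_smul_eq {ζ : Circle} (hζ : Dense (Subgroup.zpowers ζ : Set Circle))
    {S : Set ℂ} (hS : IsClosed S) (hne : S.Nonempty) (hsub : S ⊆ Metric.sphere 0 1)
    (hζS : ζ • S = S) : S = Metric.sphere 0 1 := by
  obtain ⟨z, hz⟩ := hne
  refine hsub.antisymm ((Circle.sphere_subset_orbit (hsub hz)).trans ?_)
  exact MulAction.orbit_subset_of_le_stabilizer hζ hS
    (Subgroup.zpowers_le.mpr (MulAction.mem_stabilizer_iff.mpr hζS)) hz

section

variable {R A : Type*} [CommSemiring R] [Ring A] [Algebra R A]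

theorem spectrum.units_smul_eq_self_of_mul_eq_smul_mul {a : A} {w : Aˣ} {c : Rˣ}
    (h : a * w = c • (w * a)) : c • spectrum R a = spectrum R a := by
  have ha : a = c • (w * a * ↑w⁻¹) := by
    rw [← smul_mul_assoc, ← h, Units.mul_inv_cancel_right]
  conv_rhs => rw [ha, spectrum.unit_smul_eq_smul, spectrum.units_conjugate]

theorem spectrum.units_smul_eq_self_of_mul_eq_smul_mul' {a : A} {w : Aˣ} {c : Rˣ}
    (h : w * a = c • (a * w)) : c • spectrum R a = spectrum R a := by
  have ha : a = c • (↑w⁻¹ * a * w) := by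
    rw [mul_assoc, ← mul_smul_comm, ← h, Units.inv_mul_cancel_left]
  conv_rhs => rw [ha, spectrum.unit_smul_eq_smul, spectrum.units_conjugate']

end

/-- If `u, v` are unitaries in a nontrivial unital C*-algebra satisfying the
`θ`-commutation relation with `θ` irrational, then the spectrum of each of `u` and `v`
is the full unit circle. -/
theorem spectrum_eq_unit_circle_of_irrational_commutation
    {A : Type*} [CStarAlgebra A] [Nontrivial A]
    (θ : ℝ) (hθ : Irrational θ) (u v : unitary A)
    (huv : (u : A) * v = Complex.exp (2 * Real.pi * Complex.I * θ) • ((v : A) * u)) :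
    spectrum ℂ (u : A) = Metric.sphere (0 : ℂ) 1 ∧
    spectrum ℂ (v : A) = Metric.sphere (0 : ℂ) 1 := by
  set ζ := Circle.exp (2 * π * θ)
  have hζ : Complex.exp (2 * π * Complex.I * θ) = Circle.toUnits ζ := by
    simp only [Circle.toUnits_apply, Units.val_mk0, ζ, Circle.coe_exp]
    push_cast
    ring_nf
  rw [hζ] at huv
  have hdense := Circle.dense_zpowers_exp_of_irrational hθ
  have hu := spectrum.units_smul_eq_self_of_mul_eq_smul_mul (w := Unitary.toUnits v) huv
  have hv := spectrum.units_smul_eq_self_of_mul_eq_smul_mul' (w := Unitary.toUnits u) huv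
  exact ⟨Circle.eq_sphere_of_smul_eq hdense (spectrum.isClosed _) (spectrum.nonempty _)
      (Unitary.spectrum_subset_circle u) hu,
    Circle.eq_sphere_of_smul_eq hdense (spectrum.isClosed _) (spectrum.nonempty _)
      (Unitary.spectrum_subset_circle v) hv⟩
end

section
/- Let A be a unital C*-algebra, let θ be an irrational real number, and let u, v be unitary elements of A satisfying the θ-commutation relation u·v = exp(2πiθ)·(v·u). Let φ : A → ℂ be a linear functional such that φ(1) = 1, φ(star(a)·a) is a nonnegative real number for every a ∈ A, and φ is invariant under conjugation by u and by v, i.e. φ(u·a·star(u)) = φ(a) and φ(v·a·star(v)) = φ(a) for all a ∈ A. Then for all integers m, n with (m, n) ≠ (0, 0) one has φ(u^m · v^n) = 0, where integer powers are taken in the unitary group. (Uniqueness of the canonical trace on the quantum torus.) -/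
open scoped Real

/-!
Conjugation by `u` rescales the monomial `u^m v^n` by `exp(2πiθ)^n`, and conjugation by `v`
rescales it by `exp(2πiθ)^(-m)`. A functional invariant under a conjugation that rescales `x` by
`λ ≠ 1` satisfies `φ x = λ φ x`, hence `φ x = 0`; irrationality of `θ` makes `exp(2πiθ)^k ≠ 1`
for every `k ≠ 0`, and `(m, n) ≠ (0, 0)` lets us pick the generator whose scalar is not `1`.
-/

theorem Irrational.exp_two_pi_I_mul_zpow_ne_one {θ : ℝ} (hθ : Irrational θ) {k : ℤ}
    (hk : k ≠ 0) : Complex.exp (2 * π * Complex.I * θ) ^ k ≠ 1 := by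
  rw [← Complex.exp_int_mul, Ne, Complex.exp_eq_one_iff]
  rintro ⟨j, hj⟩
  have hkj : ((k * θ : ℝ) : ℂ) = j :=
    mul_right_cancel₀ Complex.two_pi_I_ne_zero (by push_cast; linear_combination hj)
  exact (hθ.intCast_mul hk).ne_int j (by exact_mod_cast hkj)

theorem LinearMap.eq_zero_of_map_smul_eq {K M : Type*} [Field K] [AddCommGroup M] [Module K M]
    (φ : M →ₗ[K] K) {c : K} (hc : c ≠ 1) {x : M} (h : φ (c • x) = φ x) : φ x = 0 := by
  rw [map_smul, smul_eq_mul] at h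
  have : (c - 1) * φ x = 0 := by linear_combination h
  exact (mul_eq_zero.mp this).resolve_left (sub_ne_zero.mpr hc)

theorem mul_mul_eq_smul_of_mul_eq_smul {K A : Type*} [CommSemiring K] [Semiring A]
    [Algebra K A] {a x y : A} {c d : K}
    (hx : a * x = c • (x * a)) (hy : a * y = d • (y * a)) :
    a * (x * y) = (c * d) • (x * y * a) := by
  rw [← mul_assoc, hx, smul_mul_assoc, mul_assoc, hy, mul_smul_comm, smul_smul, ← mul_assoc]

section Unitary

variable {K A : Type*} [Field K] [Ring A] [StarMul A] [Algebra K A] {c : K}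

theorem mul_star_eq_inv_smul_of_mul_eq_smul {a : A} {v : unitary A} (hc : c ≠ 0)
    (h : a * v = c • ((v : A) * a)) : a * star (v : A) = c⁻¹ • (star (v : A) * a) := by
  have hv := congrArg (fun x => star (v : A) * x * star (v : A)) h
  simp only [mul_smul_comm, smul_mul_assoc, mul_assoc, Unitary.mul_star_self_of_mem v.prop,
    mul_one] at hv
  rw [← mul_assoc, Unitary.star_mul_self_of_mem v.prop, one_mul] at hv
  rw [hv, smul_smul, inv_mul_cancel₀ hc, one_smul]

theorem mul_coe_zpow_eq_zpow_smul {a : A} {v : unitary A} (hc : c ≠ 0)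
    (h : a * v = c • ((v : A) * a)) (n : ℤ) :
    a * ↑(v ^ n) = c ^ n • (↑(v ^ n) * a) := by
  induction n using Int.induction_on with
  | zero => simp
  | succ k ih =>
    rw [zpow_add_one, Submonoid.coe_mul, zpow_add_one₀ hc]
    exact mul_mul_eq_smul_of_mul_eq_smul ih h
  | pred k ih =>
    rw [zpow_sub_one, Submonoid.coe_mul, zpow_sub_one₀ hc, ← Unitary.star_eq_inv,
      Unitary.coe_star]
    exact mul_mul_eq_smul_of_mul_eq_smul ih (mul_star_eq_inv_smul_of_mul_eq_smul hc h)

theorem conj_eq_smul_of_mul_eq_smul {w : unitary A} {x : A}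
    (h : (w : A) * x = c • (x * w)) : (w : A) * x * star (w : A) = c • x := by
  rw [h, smul_mul_assoc, mul_assoc, Unitary.mul_star_self_of_mem w.prop, mul_one]

variable {u v : unitary A}

theorem conj_zpow_mul_zpow_eq_smul_left (hc : c ≠ 0) (huv : (u : A) * v = c • ((v : A) * u))
    (m n : ℤ) :
    (u : A) * (↑(u ^ m) * ↑(v ^ n)) * star (u : A) = c ^ n • (↑(u ^ m) * ↑(v ^ n)) := by
  have hu : (u : A) * ↑(u ^ m) = (1 : K) • (↑(u ^ m) * u) := by
    rw [one_smul]
    exact congrArg Subtype.val ((Commute.refl u).zpow_right m).eq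
  apply conj_eq_smul_of_mul_eq_smul
  simpa only [one_mul] using
    mul_mul_eq_smul_of_mul_eq_smul hu (mul_coe_zpow_eq_zpow_smul hc huv n)

theorem conj_zpow_mul_zpow_eq_smul_right (hc : c ≠ 0) (huv : (u : A) * v = c • ((v : A) * u))
    (m n : ℤ) :
    (v : A) * (↑(u ^ m) * ↑(v ^ n)) * star (v : A) = c ^ (-m) • (↑(u ^ m) * ↑(v ^ n)) := by
  have hvu : (v : A) * u = c⁻¹ • ((u : A) * v) := by
    rw [huv, smul_smul, inv_mul_cancel₀ hc, one_smul]
  have hv : (v : A) * ↑(v ^ n) = (1 : K) • (↑(v ^ n) * v) := by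
    rw [one_smul]
    exact congrArg Subtype.val ((Commute.refl v).zpow_right n).eq
  apply conj_eq_smul_of_mul_eq_smul
  simpa only [mul_one, inv_zpow'] using
    mul_mul_eq_smul_of_mul_eq_smul (mul_coe_zpow_eq_zpow_smul (inv_ne_zero hc) hvu m) hv

end Unitary

theorem state_invariant_vanishes_on_monomials_general
    {A : Type*} [CStarAlgebra A]
    (θ : ℝ) (hθ : Irrational θ) (u v : unitary A)
    (huv : (u : A) * v = Complex.exp (2 * Real.pi * Complex.I * θ) • ((v : A) * u))
    (φ : A →ₗ[ℂ] ℂ)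
    (hφu : ∀ a : A, φ ((u : A) * a * star (u : A)) = φ a)
    (hφv : ∀ a : A, φ ((v : A) * a * star (v : A)) = φ a) :
    ∀ m n : ℤ, (m, n) ≠ (0, 0) →
      φ (((u ^ m : unitary A) : A) * ((v ^ n : unitary A) : A)) = 0 := by
  intro m n hmn
  have hc := Complex.exp_ne_zero (2 * π * Complex.I * θ)
  rcases eq_or_ne n 0 with rfl | hn
  · have hm : m ≠ 0 := by rintro rfl; exact hmn rfl
    refine φ.eq_zero_of_map_smul_eq (hθ.exp_two_pi_I_mul_zpow_ne_one (neg_ne_zero.mpr hm)) ?_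
    rw [← conj_zpow_mul_zpow_eq_smul_right hc huv, hφv]
  · refine φ.eq_zero_of_map_smul_eq (hθ.exp_two_pi_I_mul_zpow_ne_one hn) ?_
    rw [← conj_zpow_mul_zpow_eq_smul_left hc huv, hφu]

/-- **Uniqueness of the canonical trace on the quantum torus.**  Let `u, v` be unitaries
in a unital C*-algebra satisfying the `θ`-commutation relation with `θ` irrational, and
let `φ` be a state invariant under conjugation by `u` and by `v`.  Then `φ` vanishes on
all monomials `u^m v^n` with `(m, n) ≠ (0, 0)`. -/
theorem state_invariant_vanishes_on_monomials
    {A : Type*} [CStarAlgebra A]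
    (θ : ℝ) (hθ : Irrational θ) (u v : unitary A)
    (huv : (u : A) * v = Complex.exp (2 * Real.pi * Complex.I * θ) • ((v : A) * u))
    (φ : A →ₗ[ℂ] ℂ)
    (hφ1 : φ 1 = 1)
    (hφpos : ∀ a : A, ∃ r : ℝ, 0 ≤ r ∧ φ (star a * a) = r)
    (hφu : ∀ a : A, φ ((u : A) * a * star (u : A)) = φ a)
    (hφv : ∀ a : A, φ ((v : A) * a * star (v : A)) = φ a) :
    ∀ m n : ℤ, (m, n) ≠ (0, 0) →
      φ (((u ^ m : unitary A) : A) * ((v ^ n : unitary A) : A)) = 0 :=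
  state_invariant_vanishes_on_monomials_general θ hθ u v huv φ hφu hφv
end

section
/- Let A be a unital C*-algebra, let θ be a real number, and let u, v be unitary elements of A satisfying the θ-commutation relation u·v = exp(2πiθ)·(v·u). Then for all integers p, q, r, s with p·s − q·r = 1, the elements u^p·v^q and u^r·v^s (integer powers taken in the unitary group) satisfy the same commutation relation: (u^p·v^q)·(u^r·v^s) = exp(2πiθ)·((u^r·v^s)·(u^p·v^q)). (Well-definedness of the SL(2,ℤ) endomorphisms of the quantum torus.) -/
/-!
The scalar `c` in `QCommute c x y`, i.e. `x * y = c • (y * x)`, is multiplicative in each of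
`x`, `y` and is inverted when they are swapped. Hence `QCommute c u v` gives
`QCommute (c ^ (m * n)) (u ^ m) (v ^ n)`, and expanding `(u ^ p * v ^ q) (u ^ r * v ^ s)` yields
the factor `c ^ (p * s) * c ^ (-(r * q))`, which is `c ^ (p * s - q * r) = c`.
-/

def QCommute {R A : Type*} [Mul A] [SMul R A] (c : R) (x y : A) : Prop :=
  x * y = c • (y * x)

section CommSemiring

variable {R A : Type*} [CommSemiring R] [Semiring A] [Algebra R A]

theorem qCommute_one_iff {x y : A} : QCommute (1 : R) x y ↔ Commute x y := by
  rw [QCommute, one_smul]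
  rfl

namespace QCommute

theorem mul_left {a b : R} {x y z : A} (hx : QCommute a x z) (hy : QCommute b y z) :
    QCommute (a * b) (x * y) z := by
  unfold QCommute at *
  rw [mul_assoc, hy, mul_smul_comm, ← mul_assoc, hx, smul_mul_assoc, smul_smul, mul_comm a,
    mul_assoc]

theorem mul_right {a b : R} {x y z : A} (hy : QCommute a x y) (hz : QCommute b x z) :
    QCommute (a * b) x (y * z) := by
  unfold QCommute at *
  rw [← mul_assoc, hy, smul_mul_assoc, mul_assoc, hz, mul_smul_comm, smul_smul, mul_assoc]

theorem pow_left {c : R} {x a : A} (h : QCommute c x a) (n : ℕ) :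
    QCommute (c ^ n) (x ^ n) a := by
  induction n with
  | zero => rw [pow_zero, pow_zero]; exact qCommute_one_iff.2 (Commute.one_left a)
  | succ n ih => rw [pow_succ, pow_succ]; exact ih.mul_left h

theorem map_inv_right {G : Type*} [Group G] (φ : G →* A) {c : R} {g : G} {a : A}
    (h : QCommute c (φ g) a) : QCommute c a (φ g⁻¹) := by
  have h_inv_mul : φ g⁻¹ * φ g = 1 := by rw [← map_mul, inv_mul_cancel, map_one]
  have h_mul_inv : φ g * φ g⁻¹ = 1 := by rw [← map_mul, mul_inv_cancel, map_one]
  calc a * φ g⁻¹ = φ g⁻¹ * (φ g * a) * φ g⁻¹ := by rw [← mul_assoc, h_inv_mul, one_mul]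
    _ = c • (φ g⁻¹ * a * (φ g * φ g⁻¹)) := by
      rw [h, mul_smul_comm, smul_mul_assoc]; simp only [mul_assoc]
    _ = c • (φ g⁻¹ * a) := by rw [h_mul_inv, mul_one]

end QCommute

end CommSemiring

namespace QCommute

variable {𝕜 A : Type*} [Field 𝕜] [Semiring A] [Algebra 𝕜 A]

theorem symm {c : 𝕜} {x y : A} (hc : c ≠ 0) (h : QCommute c x y) : QCommute c⁻¹ y x := by
  rw [QCommute, h, smul_smul, inv_mul_cancel₀ hc, one_smul]

variable {G : Type*} [Group G] (φ : G →* A)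

theorem map_zpow_left {c : 𝕜} {g : G} {a : A} (hc : c ≠ 0) (h : QCommute c (φ g) a) (n : ℤ) :
    QCommute (c ^ n) (φ (g ^ n)) a := by
  cases n with
  | ofNat n => simpa only [Int.ofNat_eq_natCast, zpow_natCast, map_pow] using h.pow_left n
  | negSucc n =>
    rw [zpow_negSucc, zpow_negSucc]
    have hn : QCommute (c ^ (n + 1)) (φ (g ^ (n + 1))) a := by
      rw [map_pow]; exact h.pow_left (n + 1)
    exact (hn.map_inv_right φ).symm (pow_ne_zero _ hc)

theorem map_zpow_zpow {c : 𝕜} {g h : G} (hc : c ≠ 0) (hgh : QCommute c (φ g) (φ h)) (m n : ℤ) :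
    QCommute (c ^ (m * n)) (φ (g ^ m)) (φ (h ^ n)) := by
  have hcm : (c ^ m)⁻¹ ≠ 0 := inv_ne_zero (zpow_ne_zero m hc)
  have key := (((hgh.map_zpow_left φ hc m).symm (zpow_ne_zero m hc)).map_zpow_left φ hcm n).symm
    (zpow_ne_zero n hcm)
  rwa [inv_zpow, inv_inv, ← zpow_mul] at key

end QCommute

/-- **Well-definedness of the `SL(2,ℤ)` endomorphisms of the quantum torus.**  If
unitaries `u, v` satisfy the `θ`-commutation relation, then for any integers
`p, q, r, s` with `p·s − q·r = 1` the elements `u^p v^q` and `u^r v^s` satisfy the same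
commutation relation. -/
theorem sl2_monomials_commutation
    {A : Type*} [CStarAlgebra A] (θ : ℝ) (u v : unitary A)
    (huv : (u : A) * v = Complex.exp (2 * Real.pi * Complex.I * θ) • ((v : A) * u))
    (p q r s : ℤ) (hdet : p * s - q * r = 1) :
    ((u ^ p * v ^ q : unitary A) : A) * ((u ^ r * v ^ s : unitary A) : A) =
      Complex.exp (2 * Real.pi * Complex.I * θ) •
        (((u ^ r * v ^ s : unitary A) : A) * ((u ^ p * v ^ q : unitary A) : A)) := by
  set c := Complex.exp (2 * Real.pi * Complex.I * θ)
  set φ := (unitary A).subtype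
  have hc : c ≠ 0 := Complex.exp_ne_zero _
  have hu : QCommute (1 : ℂ) (φ (u ^ p)) (φ (u ^ r)) :=
    qCommute_one_iff.2 ((Commute.zpow_zpow_self u p r).map φ)
  have hv : QCommute (1 : ℂ) (φ (v ^ q)) (φ (v ^ s)) :=
    qCommute_one_iff.2 ((Commute.zpow_zpow_self v q s).map φ)
  have hps := QCommute.map_zpow_zpow φ hc huv p s
  have hrq := (QCommute.map_zpow_zpow φ hc huv r q).symm (zpow_ne_zero _ hc)
  have hfactor : 1 * c ^ (p * s) * ((c ^ (r * q))⁻¹ * 1) = c := by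
    rw [one_mul, mul_one, ← zpow_neg, ← zpow_add₀ hc,
      show p * s + -(r * q) = 1 by linarith, zpow_one]
  have key := (hu.mul_right hps).mul_left (hrq.mul_right hv)
  rwa [hfactor] at key
end

section
/- Let G and H be additive subgroups of ℝ with 1 ∈ G and 1 ∈ H, and let η : G → H be an order-preserving additive group homomorphism (η(x + y) = η(x) + η(y), and x ≤ y implies η(x) ≤ η(y), comparing elements as real numbers) such that η(1) = 1. Then η(g) = g (as real numbers) for every g ∈ G. -/
/-! A monotone additive map `f` with `f 1 = 1` sends `m • 1` to `m` for every integer `m` and is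
`ℤ`-homogeneous, so `m ≤ n • g` forces `m ≤ n • f g`: no rational can lie strictly between
`f g` and `g`. Applying this to `g` and `-g` gives both inequalities. -/

namespace AddMonoidHom

variable {G : AddSubgroup ℝ} (f : G →+ ℝ) (hf : Monotone f) (h1 : (1 : ℝ) ∈ G)
  (hf1 : f ⟨1, h1⟩ = 1)
include hf hf1

theorem self_le_apply_of_monotone (g : G) : (g : ℝ) ≤ f g := by
  by_contra! hlt
  obtain ⟨q, hfq, hqg⟩ := exists_rat_btwn hlt
  have hden : (0 : ℝ) < q.den := by positivity
  have hnum_le : ((q.num • (⟨1, h1⟩ : G) : G) : ℝ) ≤ (((q.den : ℤ) • g : G) : ℝ) := by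
    rw [Rat.cast_def, div_lt_iff₀ hden] at hqg
    push_cast [zsmul_eq_mul]
    linarith
  have hnum_le_f := hf hnum_le
  rw [map_zsmul, map_zsmul, hf1, zsmul_eq_mul, zsmul_eq_mul, mul_one] at hnum_le_f
  rw [Rat.cast_def, lt_div_iff₀ hden] at hfq
  push_cast at hnum_le_f
  linarith

theorem apply_eq_self_of_monotone (g : G) : f g = g := by
  have hneg := f.self_le_apply_of_monotone hf h1 hf1 (-g)
  rw [map_neg, AddSubgroup.coe_neg] at hneg
  exact le_antisymm (by linarith) (f.self_le_apply_of_monotone hf h1 hf1 g)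

end AddMonoidHom

theorem orderPreserving_hom_fixing_one_eq_id_general
    (G H : AddSubgroup ℝ) (h1G : (1 : ℝ) ∈ G)
    (η : G → H)
    (hadd : ∀ x y : G, (η (x + y) : ℝ) = (η x : ℝ) + (η y : ℝ))
    (hmono : ∀ x y : G, (x : ℝ) ≤ (y : ℝ) → (η x : ℝ) ≤ (η y : ℝ))
    (hone : (η ⟨1, h1G⟩ : ℝ) = 1) :
    ∀ g : G, (η g : ℝ) = (g : ℝ) :=
  (AddMonoidHom.mk' (fun g => (η g : ℝ)) hadd).apply_eq_self_of_monotone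
    (fun x y hxy => hmono x y hxy) h1G hone

/-- An order-preserving additive group homomorphism between additive subgroups of `ℝ`
both containing `1`, which sends `1` to `1`, is the identity (as real numbers). -/
theorem orderPreserving_hom_fixing_one_eq_id
    (G H : AddSubgroup ℝ) (h1G : (1 : ℝ) ∈ G) (h1H : (1 : ℝ) ∈ H)
    (η : G → H)
    (hadd : ∀ x y : G, (η (x + y) : ℝ) = (η x : ℝ) + (η y : ℝ))
    (hmono : ∀ x y : G, (x : ℝ) ≤ (y : ℝ) → (η x : ℝ) ≤ (η y : ℝ))
    (hone : (η ⟨1, h1G⟩ : ℝ) = 1) :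
    ∀ g : G, (η g : ℝ) = (g : ℝ) :=
  orderPreserving_hom_fixing_one_eq_id_general G H h1G η hadd hmono hone
end

section
/- Let G and H be additive subgroups of ℝ, let p be a real number with p > 0 and p ∈ G, let r be an integer, and let η : G → H be an order-preserving additive group homomorphism (additive, and x ≤ y implies η(x) ≤ η(y), comparing elements as real numbers) such that η(p) = r·p. Then η(g) = r·g (as real numbers) for every g ∈ G. -/
/-!
Both `η` and `g ↦ r * g` are monotone additive maps to `ℝ` that agree at `p > 0`. Bracketing `g`
between consecutive integer multiples of `p` shows that they differ by at most `η p` everywhere;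
applied to `n • g` this bounds `n` times the difference for every `n`, so the difference vanishes.
-/

section

variable {G : Type*} [AddCommGroup G] [LinearOrder G] [IsOrderedAddMonoid G] [Archimedean G]

theorem AddMonoidHom.abs_sub_le_of_monotone_of_apply_eq {f e : G →+ ℝ} (hf : Monotone f)
    (he : Monotone e) {p : G} (hp : 0 < p) (hfe : f p = e p) (g : G) :
    |f g - e g| ≤ f p := by
  obtain ⟨k, hkg, hgk⟩ := (existsUnique_zsmul_near_of_pos hp g).exists
  have bracket {φ : G →+ ℝ} (hφ : Monotone φ) : k * φ p ≤ φ g ∧ φ g ≤ (k + 1) * φ p := by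
    simpa only [map_zsmul, zsmul_eq_mul, Int.cast_add, Int.cast_one] using
      And.intro (hφ hkg) (hφ hgk.le)
  obtain ⟨hf₁, hf₂⟩ := bracket hf
  obtain ⟨he₁, he₂⟩ := bracket he
  rw [← hfe] at he₁ he₂
  rw [abs_sub_le_iff]
  constructor <;> linarith

theorem AddMonoidHom.eq_of_monotone_of_apply_eq {f e : G →+ ℝ} (hf : Monotone f)
    (he : Monotone e) {p : G} (hp : 0 < p) (hfe : f p = e p) : f = e := by
  ext g
  by_contra hne
  obtain ⟨n, hn⟩ := exists_lt_nsmul (abs_pos.mpr (sub_ne_zero.mpr hne)) (f p)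
  have := abs_sub_le_of_monotone_of_apply_eq hf he hp hfe (n • g)
  rw [map_nsmul, map_nsmul, ← smul_sub, abs_nsmul] at this
  exact (hn.trans_le this).false

end

/-- An order-preserving additive group homomorphism between additive subgroups of `ℝ`
which sends some positive `p ∈ G` to `r·p` (with `r` an integer) is multiplication by
`r` (as real numbers). -/
theorem orderPreserving_hom_scaling
    (G H : AddSubgroup ℝ) (p : ℝ) (hp : 0 < p) (hpG : p ∈ G) (r : ℤ)
    (η : G → H)
    (hadd : ∀ x y : G, (η (x + y) : ℝ) = (η x : ℝ) + (η y : ℝ))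
    (hmono : ∀ x y : G, (x : ℝ) ≤ (y : ℝ) → (η x : ℝ) ≤ (η y : ℝ))
    (hpval : (η ⟨p, hpG⟩ : ℝ) = (r : ℝ) * p) :
    ∀ g : G, (η g : ℝ) = (r : ℝ) * (g : ℝ) := by
  set f : G →+ ℝ := AddMonoidHom.mk' (fun x ↦ (η x : ℝ)) hadd
  set e : G →+ ℝ := (AddMonoidHom.mulLeft (r : ℝ)).comp G.subtype
  have hf : Monotone f := hmono
  have hr : (0 : ℝ) ≤ r := by
    have := hf (show (0 : G) ≤ ⟨p, hpG⟩ from hp.le)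
    rw [map_zero] at this
    exact nonneg_of_mul_nonneg_left (this.trans_eq hpval) hp
  have he : Monotone e := fun x y hxy ↦ mul_le_mul_of_nonneg_left hxy hr
  have hfe : f = e := AddMonoidHom.eq_of_monotone_of_apply_eq hf he
    (show (0 : G) < ⟨p, hpG⟩ from hp) hpval
  exact DFunLike.congr_fun hfe
end
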